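/- arXiv:1303.1290 — 7 statements merged into one kernel-verified Lean document; each statement's English description precedes it below -/
import Mathlib

section
/- For every i ∈ {3,4,5}, every finite type β, and every subgroup H of Equiv.Perm β, the direct sum C_i ⊕ H, a subgroup of Equiv.Perm (Fin i ⊕ β), is not k-representable for any k ≥ 2. -/
/-- The symmetry (invariance) group of a function `f` on boolean tuples indexed by `α`:
all permutations `σ` with `f (x ∘ σ) = f x` for every `x : α → Bool`. -/
def symmGroup {α V : Type*} (f : (α → Bool) → V) : Subgroup (Equiv.Perm α) where
  carrier := {σ | ∀ x : α → Bool, f (x ∘ σ) = f x}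
  one_mem' := by intro x; simp
  mul_mem' := by
    intro a b ha hb x
    have h : x ∘ ⇑(a * b) = (x ∘ ⇑a) ∘ ⇑b := by
      ext y; simp [Equiv.Perm.mul_apply, Function.comp]
    rw [h, hb, ha]
  inv_mem' := by
    intro a ha x
    have h := ha (x ∘ ⇑a⁻¹)
    have h2 : (x ∘ ⇑a⁻¹) ∘ ⇑a = x := by
      ext y; simp [Function.comp]
    rw [h2] at h
    exact h.symm

/-- A subgroup of `Equiv.Perm α` is `k`-representable if it is the symmetry group of a
`k`-valued boolean function. -/
def Representable (k : ℕ) {α : Type*} (G : Subgroup (Equiv.Perm α)) : Prop :=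
  ∃ f : (α → Bool) → Fin k, G = symmGroup f

/-- The direct sum of two permutation groups, acting on the disjoint union. -/
def directSum {α β : Type*} (G : Subgroup (Equiv.Perm α)) (H : Subgroup (Equiv.Perm β)) :
    Subgroup (Equiv.Perm (α ⊕ β)) :=
  (G.prod H).map (Equiv.Perm.sumCongrHom α β)

/-- A permutation group is regular if it is transitive and only the identity has a fixed point. -/
def IsRegularPermGroup {α : Type*} (G : Subgroup (Equiv.Perm α)) : Prop :=
  (∀ a b : α, ∃ σ ∈ G, σ a = b) ∧ ∀ σ ∈ G, ∀ a : α, σ a = a → σ = 1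

/-- `B` is a direct sum of regular groups: under some identification of `α` with a finite
sigma type, `B` consists exactly of the permutations preserving each block and acting on
block `i` as an element of a fixed regular group `G i`. -/
def IsDirectSumOfRegular {α : Type*} (B : Subgroup (Equiv.Perm α)) : Prop :=
  ∃ (ι : Type) (_ : Fintype ι) (β : ι → Type) (_ : ∀ i, Fintype (β i))
    (e : α ≃ Σ i, β i) (G : ∀ i, Subgroup (Equiv.Perm (β i))),
    (∀ i, IsRegularPermGroup (G i)) ∧
    ∀ π : Equiv.Perm α, π ∈ B ↔
      ∃ g : ∀ i, Equiv.Perm (β i), (∀ i, g i ∈ G i) ∧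
        ∀ a : α, e (π a) = ⟨(e a).1, g (e a).1 (e a).2⟩

/-- `C_n`, the cyclic group generated by the cycle `0 ↦ 1 ↦ ⋯ ↦ n-1 ↦ 0`. -/
def Cgroup (n : ℕ) : Subgroup (Equiv.Perm (Fin n)) := Subgroup.zpowers (finRotate n)

/-- The Klein four-group `K₄ ≤ S₄` generated by `(0 1)(2 3)` and `(0 2)(1 3)`. -/
def K4 : Subgroup (Equiv.Perm (Fin 4)) :=
  Subgroup.closure {Equiv.swap 0 1 * Equiv.swap 2 3, Equiv.swap 0 2 * Equiv.swap 1 3}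

/-- Permutation isomorphism of permutation groups. -/
def PermIso {α β : Type*} (G : Subgroup (Equiv.Perm α)) (H : Subgroup (Equiv.Perm β)) : Prop :=
  ∃ e : α ≃ β, ∀ σ : Equiv.Perm α, σ ∈ G ↔ e.permCongr σ ∈ H

/-- A set `S` is regular in `H` if the identity is the only element of `H` mapping `S` to itself. -/
def IsRegularSet {α : Type*} (S : Set α) (H : Subgroup (Equiv.Perm α)) : Prop :=
  ∀ σ ∈ H, ⇑σ '' S = S → σ = 1

/-- The subdirect sum `G/M ⊕_φ H/N`: all `Equiv.sumCongr σ τ` with `σ ∈ G`, `τ ∈ H` and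
`φ (σ M) = τ N`. -/
def subdirectSum {α β : Type*} (G : Subgroup (Equiv.Perm α)) (H : Subgroup (Equiv.Perm β))
    (M : Subgroup G) [M.Normal] (N : Subgroup H) [N.Normal]
    (φ : G ⧸ M ≃* H ⧸ N) : Subgroup (Equiv.Perm (α ⊕ β)) where
  carrier := {π | ∃ (σ : G) (τ : H),
    φ (QuotientGroup.mk σ) = QuotientGroup.mk τ ∧
    π = Equiv.Perm.sumCongrHom α β ((σ : Equiv.Perm α), (τ : Equiv.Perm β))}
  one_mem' := ⟨1, 1, by simp, by simp⟩
  mul_mem' := by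
    rintro _ _ ⟨σ₁, τ₁, h1, rfl⟩ ⟨σ₂, τ₂, h2, rfl⟩
    refine ⟨σ₁ * σ₂, τ₁ * τ₂, ?_, ?_⟩
    · rw [QuotientGroup.mk_mul, QuotientGroup.mk_mul, map_mul, h1, h2]
    · rw [← map_mul]
      rfl
  inv_mem' := by
    rintro _ ⟨σ, τ, h, rfl⟩
    refine ⟨σ⁻¹, τ⁻¹, ?_, ?_⟩
    · rw [QuotientGroup.mk_inv, QuotientGroup.mk_inv, map_inv, h]
    · rw [← map_inv]
      rfl

/-!
A representable group `G = symmGroup f` contains every permutation `r` that moves each boolean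
vector only within its `G`-orbit, i.e. with `x ∘ r ∈ {x ∘ σ | σ ∈ G}` for all `x`. For
`G ⊕ H` it suffices to check this on the first summand, so `r ⊕ 1 ∈ G ⊕ H` and hence `r ∈ G`.
For `n ≤ 5` every binary word of length `n` is, up to rotation, equal to its reflection
`j ↦ -j`, while for `n ≥ 3` this reflection is not a rotation.
-/

open Equiv

theorem Representable.mem_of_forall_exists_comp_eq {k : ℕ} {α : Type*}
    {G : Subgroup (Perm α)} (hG : Representable k G) {r : Perm α}
    (hr : ∀ x : α → Bool, ∃ σ ∈ G, x ∘ r = x ∘ σ) : r ∈ G := by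
  obtain ⟨f, rfl⟩ := hG
  intro x
  obtain ⟨σ, hσ, hx⟩ := hr x
  rw [hx]
  exact hσ x

theorem sumCongr_mem_directSum_iff {α β : Type*} {G : Subgroup (Perm α)}
    {H : Subgroup (Perm β)} {σ : Perm α} {τ : Perm β} :
    sumCongr σ τ ∈ directSum G H ↔ σ ∈ G ∧ τ ∈ H :=
  Subgroup.mem_map_iff_mem Perm.sumCongrHom_injective (x := (σ, τ))

theorem mem_of_representable_directSum {k : ℕ} {α β : Type*} {G : Subgroup (Perm α)}
    {H : Subgroup (Perm β)} (hGH : Representable k (directSum G H)) {r : Perm α}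
    (hr : ∀ x : α → Bool, ∃ σ ∈ G, x ∘ r = x ∘ σ) : r ∈ G := by
  have hr1 : sumCongr r 1 ∈ directSum G H := hGH.mem_of_forall_exists_comp_eq fun x => by
    obtain ⟨σ, hσ, hx⟩ := hr (x ∘ Sum.inl)
    refine ⟨sumCongr σ 1, sumCongr_mem_directSum_iff.2 ⟨hσ, H.one_mem⟩, ?_⟩
    ext (a | b)
    · exact congrFun hx a
    · rfl
  exact (sumCongr_mem_directSum_iff.1 hr1).1

theorem Fin.one_ne_neg_one {n : ℕ} [NeZero n] (hn : 2 < n) : (1 : Fin n) ≠ -1 := by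
  rw [ne_eq, eq_neg_iff_add_eq_zero, Fin.ext_iff, Fin.val_add, Fin.val_one',
    Nat.one_mod_eq_one.2 (by omega), Nat.mod_eq_of_lt (by omega)]
  simp

theorem neg_notMem_Cgroup {n : ℕ} (hn : 2 < n) : Equiv.neg (Fin n) ∉ Cgroup n := by
  have : NeZero n := ⟨by omega⟩
  intro h
  obtain ⟨k, hk⟩ := Subgroup.mem_zpowers_iff.1 h
  have hcomm : Commute (finRotate n) (Equiv.neg (Fin n)) := hk ▸ (Commute.refl _).zpow_right k
  have h0 := congr($hcomm 0)
  simp only [Perm.mul_apply, finRotate_apply, neg_apply, neg_zero, zero_add] at h0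
  exact Fin.one_ne_neg_one hn h0

theorem exists_mem_Cgroup_comp_neg_eq {n : ℕ} (hn : n ≤ 5) (x : Fin n → Bool) :
    ∃ σ ∈ Cgroup n, x ∘ Equiv.neg (Fin n) = x ∘ σ := by
  suffices ∃ m : Fin 5, x ∘ Equiv.neg (Fin n) = x ∘ ⇑(finRotate n ^ (m : ℕ)) by
    obtain ⟨m, hm⟩ := this
    exact ⟨_, Subgroup.pow_mem _ (Subgroup.mem_zpowers _) _, hm⟩
  revert x
  interval_cases n <;> decide

theorem directSum_cyclic_not_representable_general
    (i : ℕ) (hi : i ∈ ({3, 4, 5} : Set ℕ)) {β : Type*}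
    (H : Subgroup (Equiv.Perm β)) (k : ℕ) :
    ¬ Representable k (directSum (Cgroup i) H) := by
  simp only [Set.mem_insert_iff, Set.mem_singleton_iff] at hi
  intro hrep
  exact neg_notMem_Cgroup (by omega)
    (mem_of_representable_directSum hrep (exists_mem_Cgroup_comp_neg_eq (by omega)))

theorem directSum_cyclic_not_representable
    (i : ℕ) (hi : i ∈ ({3, 4, 5} : Set ℕ)) {β : Type*} [Fintype β]
    (H : Subgroup (Equiv.Perm β)) (k : ℕ) (hk : 2 ≤ k) :
    ¬ Representable k (directSum (Cgroup i) H) :=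
  directSum_cyclic_not_representable_general i hi H k
end

section
/- For every i ∈ {3,4,5}, the cyclic group C_i, a subgroup of Equiv.Perm (Fin i), is not k-representable for any k ≥ 2. -/
/-! For `n ≤ 5` every binary necklace of length `n` is achiral: the reflection `i ↦ -i` maps each
`x : Fin n → Bool` to a rotation of `x`. A function `f` invariant under all rotations is therefore
invariant under the reflection too, which is not a rotation once `n ≥ 3`, so `G(f) ≠ C_n`. -/

theorem mem_symmGroup_of_forall_exists_comp_eq {α V : Type*} {f : (α → Bool) → V}
    {ρ : Equiv.Perm α} (h : ∀ x : α → Bool, ∃ σ ∈ symmGroup f, x ∘ ρ = x ∘ σ) :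
    ρ ∈ symmGroup f := fun x => by
  obtain ⟨σ, hσ, hx⟩ := h x
  rw [hx]
  exact hσ x

theorem not_representable_of_forall_exists_comp_eq {α : Type*} {G : Subgroup (Equiv.Perm α)}
    {ρ : Equiv.Perm α} (hρ : ρ ∉ G) (h : ∀ x : α → Bool, ∃ σ ∈ G, x ∘ ρ = x ∘ σ) (k : ℕ) :
    ¬ Representable k G := by
  rintro ⟨f, rfl⟩
  exact hρ (mem_symmGroup_of_forall_exists_comp_eq h)

theorem Subgroup.notMem_zpowers_of_not_commute {G : Type*} [Group G] {g h : G}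
    (hgh : ¬ Commute h g) : h ∉ Subgroup.zpowers g := by
  rintro ⟨m, rfl⟩
  exact hgh ((Commute.refl g).zpow_left m)

theorem neg_notMem_cgroup {n : ℕ} (hn : 3 ≤ n) : Equiv.neg (Fin n) ∉ Cgroup n := by
  obtain ⟨m, rfl⟩ := Nat.exists_eq_add_of_le' hn
  refine Subgroup.notMem_zpowers_of_not_commute fun h => ?_
  have h0 := congr($h 0)
  simp only [Equiv.Perm.mul_apply, finRotate_apply, Equiv.neg_apply, neg_zero, zero_add] at h0
  rw [neg_eq_iff_add_eq_zero, Fin.ext_iff, Fin.val_add, Fin.val_one, Fin.val_zero,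
    Nat.mod_eq_of_lt (by omega)] at h0
  omega

theorem exists_mem_cgroup_comp_neg_eq {n : ℕ} (hn : n ∈ ({3, 4, 5} : Set ℕ))
    (x : Fin n → Bool) : ∃ σ ∈ Cgroup n, x ∘ Equiv.neg (Fin n) = x ∘ σ := by
  obtain ⟨m, hm⟩ : ∃ m : Fin n, x ∘ Equiv.neg (Fin n) = x ∘ ⇑(finRotate n ^ (m : ℕ)) := by
    rcases hn with rfl | rfl | rfl <;> revert x <;> decide
  exact ⟨_, pow_mem (Subgroup.mem_zpowers _) m, hm⟩

theorem cyclic_345_not_representable_general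
    (i : ℕ) (hi : i ∈ ({3, 4, 5} : Set ℕ)) (k : ℕ) :
    ¬ Representable k (Cgroup i) := by
  have hi3 : 3 ≤ i := by rcases hi with rfl | rfl | rfl <;> norm_num
  exact not_representable_of_forall_exists_comp_eq (neg_notMem_cgroup hi3)
    (exists_mem_cgroup_comp_neg_eq hi) k

theorem cyclic_345_not_representable
    (i : ℕ) (hi : i ∈ ({3, 4, 5} : Set ℕ)) (k : ℕ) (hk : 2 ≤ k) :
    ¬ Representable k (Cgroup i) :=
  cyclic_345_not_representable_general i hi k
end

section
/- For every natural number n with n ∉ {3,4,5}, the cyclic group C_n, a subgroup of Equiv.Perm (Fin n), is 2-representable. -/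
/-!
For `n ≥ 6` take `f` to be the indicator of the family of supports consisting of the edges
`{c, c + 1}` of the `n`-cycle and the triples `{c, c + 1, c + 3}`. Rotations preserve this family.
Conversely a permutation preserving it preserves cardinalities, so it maps edges to edges and is an
automorphism of the cycle: a rotation or a reflection. A reflection sends `{c, c + 1, c + 3}` to a
triple with gaps `2, 1` instead of `1, 2`, which is not in the family once `n ≥ 6`.
For `n ≤ 2`, `C_n` is the whole symmetric group, the symmetry group of a constant function.
-/

open Function

section FamilyIndicator

variable {α : Type*}

open Classical in
noncomputable def familyIndicator (𝓕 : Set (Set α)) : (α → Bool) → Fin 2 :=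
  fun x ↦ if {i | x i} ∈ 𝓕 then 1 else 0

theorem familyIndicator_eq_iff {𝓕 : Set (Set α)} {x y : α → Bool} :
    familyIndicator 𝓕 x = familyIndicator 𝓕 y ↔
      ({i | x i} ∈ 𝓕 ↔ {i | y i} ∈ 𝓕) := by
  unfold familyIndicator
  split_ifs <;> simp_all

theorem mem_symmGroup_familyIndicator_iff {𝓕 : Set (Set α)} {σ : Equiv.Perm α} :
    σ ∈ symmGroup (familyIndicator 𝓕) ↔ ∀ s, σ '' s ∈ 𝓕 ↔ s ∈ 𝓕 := by
  classical
  refine ⟨fun h s ↦ ?_, fun h x ↦ ?_⟩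
  · have hs := familyIndicator_eq_iff.mp (h fun i ↦ decide (i ∈ σ '' s))
    simp only [comp_apply, decide_eq_true_eq, σ.injective.mem_set_image, Set.ofPred_mem_eq] at hs
    exact hs.symm
  · have ht := h (σ ⁻¹' {i | x i})
    rw [Set.image_preimage_eq _ σ.surjective] at ht
    exact familyIndicator_eq_iff.mpr ht.symm

theorem symmGroup_const {V : Type*} (v : V) : symmGroup (fun _ : α → Bool ↦ v) = ⊤ :=
  eq_top_iff.mpr fun _ _ _ ↦ rfl

end FamilyIndicator

theorem Cgroup_eq_top {n : ℕ} (hn : n ≤ 2) : Cgroup n = ⊤ := by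
  refine (Subgroup.eq_top_iff' _).mpr fun σ ↦ ?_
  have : σ = 1 ∨ σ = finRotate n := by interval_cases n <;> revert σ <;> decide
  rcases this with rfl | rfl
  · exact one_mem _
  · exact Subgroup.mem_zpowers _

open Fin.CommRing

section Cycle

variable {n : ℕ} [NeZero n]

theorem Fin.natCast_ne_zero_of_lt {k : ℕ} (hk₀ : 0 < k) (hk : k < n) : (k : Fin n) ≠ 0 := by
  rw [Ne, Fin.natCast_eq_zero]
  exact Nat.not_dvd_of_pos_of_lt hk₀ hk

theorem Fin.induction_add_one {P : Fin n → Prop} (zero : P 0) (succ : ∀ c, P c → P (c + 1))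
    (c : Fin n) : P c := by
  rw [← Fin.cast_val_eq_self c]
  induction c.val with
  | zero => simpa using zero
  | succ k ih => simpa using succ _ ih

theorem mem_Cgroup_iff {σ : Equiv.Perm (Fin n)} :
    σ ∈ Cgroup n ↔ ∃ k, σ = Equiv.addRight k := by
  have hrot : finRotate n = Equiv.addRight 1 := Equiv.ext finRotate_apply
  simp only [Cgroup, hrot, Subgroup.mem_zpowers_iff, Equiv.zsmul_addRight, zsmul_one]
  constructor
  · rintro ⟨z, rfl⟩
    exact ⟨_, rfl⟩
  · rintro ⟨k, rfl⟩
    exact ⟨k.val, by simp⟩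

theorem map_add_one_sub_eq_of_adjacent {f : Fin n → Fin n} (hf : Injective f)
    (h2 : (2 : Fin n) ≠ 0) (hadj : ∀ c, f (c + 1) - f c = 1 ∨ f (c + 1) - f c = -1)
    (c : Fin n) :
    f (c + 1) - f c = f 1 - f 0 := by
  induction c using Fin.induction_add_one with
  | zero => simp
  | succ c hc =>
    rw [← hc]
    have hne : f (c + 1 + 1) ≠ f c := fun h ↦ h2 (by linear_combination hf h)
    rcases hadj c with h | h <;> rcases hadj (c + 1) with h' | h'
    · rw [h, h']
    · exact absurd (by linear_combination h + h') hne
    · exact absurd (by linear_combination h + h') hne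
    · rw [h, h']

theorem eq_add_mul_of_map_add_one_sub {f : Fin n → Fin n} {a : Fin n}
    (hf : ∀ c, f (c + 1) - f c = a) (c : Fin n) : f c = f 0 + c * a := by
  induction c using Fin.induction_add_one with
  | zero => simp
  | succ c hc => linear_combination hf c + hc

def cycleEdge (c : Fin n) : Set (Fin n) := {c, c + 1}

def chiralTriple (c : Fin n) : Set (Fin n) := {c, c + 1, c + 3}

variable (n) in
def cycleFamily : Set (Set (Fin n)) := Set.range cycleEdge ∪ Set.range chiralTriple

theorem image_addRight_cycleEdge (k c : Fin n) :
    Equiv.addRight k '' cycleEdge c = cycleEdge (c + k) := by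
  simp [cycleEdge, Set.image_insert_eq, add_right_comm]

theorem image_addRight_chiralTriple (k c : Fin n) :
    Equiv.addRight k '' chiralTriple c = chiralTriple (c + k) := by
  simp [chiralTriple, Set.image_insert_eq, add_right_comm]

theorem image_addRight_mem_cycleFamily (k : Fin n) {s : Set (Fin n)} (hs : s ∈ cycleFamily n) :
    Equiv.addRight k '' s ∈ cycleFamily n := by
  rcases hs with ⟨c, rfl⟩ | ⟨c, rfl⟩
  · exact Or.inl ⟨c + k, (image_addRight_cycleEdge k c).symm⟩
  · exact Or.inr ⟨c + k, (image_addRight_chiralTriple k c).symm⟩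

theorem image_addRight_mem_cycleFamily_iff (k : Fin n) (s : Set (Fin n)) :
    Equiv.addRight k '' s ∈ cycleFamily n ↔ s ∈ cycleFamily n :=
  ⟨fun h ↦ by
    simpa only [Set.image_image, Equiv.coe_addRight, add_neg_cancel_right, Set.image_id']
      using image_addRight_mem_cycleFamily (-k) h,
    image_addRight_mem_cycleFamily k⟩

theorem ncard_cycleEdge (hn : 2 ≤ n) (c : Fin n) : (cycleEdge c).ncard = 2 := by
  have h1 : ((1 : ℕ) : Fin n) ≠ 0 := Fin.natCast_ne_zero_of_lt one_pos hn
  exact Set.ncard_pair fun h ↦ h1 (by push_cast; linear_combination -h)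

theorem ncard_chiralTriple (hn : 4 ≤ n) (c : Fin n) : (chiralTriple c).ncard = 3 := by
  have h1 : ((1 : ℕ) : Fin n) ≠ 0 := Fin.natCast_ne_zero_of_lt (by norm_num) (by omega)
  have h2 : ((2 : ℕ) : Fin n) ≠ 0 := Fin.natCast_ne_zero_of_lt (by norm_num) (by omega)
  have h3 : ((3 : ℕ) : Fin n) ≠ 0 := Fin.natCast_ne_zero_of_lt (by norm_num) (by omega)
  refine Set.ncard_eq_three.mpr
    ⟨c, c + 1, c + 3, fun h ↦ h1 ?_, fun h ↦ h3 ?_, fun h ↦ h2 ?_, rfl⟩ <;>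
  · push_cast
    linear_combination -h

theorem mem_range_cycleEdge_of_ncard_eq_two (hn : 4 ≤ n) {s : Set (Fin n)}
    (hs : s ∈ cycleFamily n) (h2 : s.ncard = 2) : s ∈ Set.range cycleEdge :=
  hs.resolve_right fun ⟨c, hc⟩ ↦ by rw [← hc, ncard_chiralTriple hn] at h2; omega

theorem mem_range_chiralTriple_of_ncard_eq_three (hn : 2 ≤ n) {s : Set (Fin n)}
    (hs : s ∈ cycleFamily n) (h3 : s.ncard = 3) : s ∈ Set.range chiralTriple :=
  hs.resolve_left fun ⟨c, hc⟩ ↦ by rw [← hc, ncard_cycleEdge hn] at h3; omega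

theorem map_adjacent_of_image_mem_cycleFamily (hn : 4 ≤ n) {σ : Equiv.Perm (Fin n)}
    (hσ : ∀ s ∈ cycleFamily n, σ '' s ∈ cycleFamily n) (c : Fin n) :
    σ (c + 1) - σ c = 1 ∨ σ (c + 1) - σ c = -1 := by
  have hcard : (σ '' cycleEdge c).ncard = 2 := by
    rw [Set.ncard_image_of_injective _ σ.injective, ncard_cycleEdge (by omega)]
  obtain ⟨d, hd⟩ :=
    mem_range_cycleEdge_of_ncard_eq_two hn (hσ _ (Or.inl ⟨c, rfl⟩)) hcard
  rw [cycleEdge, cycleEdge, Set.image_pair, Set.pair_eq_pair_iff] at hd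
  rcases hd with ⟨h0, h1⟩ | ⟨h0, h1⟩
  · left; rw [← h0, ← h1]; ring
  · right; rw [← h0, ← h1]; ring

theorem image_sub_chiralTriple_ne (hn : 6 ≤ n) (a c d : Fin n) :
    (a - ·) '' chiralTriple c ≠ chiralTriple d := by
  have h1 : ((1 : ℕ) : Fin n) ≠ 0 := Fin.natCast_ne_zero_of_lt (by norm_num) (by omega)
  have h2 : ((2 : ℕ) : Fin n) ≠ 0 := Fin.natCast_ne_zero_of_lt (by norm_num) (by omega)
  have h3 : ((3 : ℕ) : Fin n) ≠ 0 := Fin.natCast_ne_zero_of_lt (by norm_num) (by omega)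
  have h4 : ((4 : ℕ) : Fin n) ≠ 0 := Fin.natCast_ne_zero_of_lt (by norm_num) (by omega)
  have h5 : ((5 : ℕ) : Fin n) ≠ 0 := Fin.natCast_ne_zero_of_lt (by norm_num) (by omega)
  intro h
  have mem : ∀ x ∈ chiralTriple d, x = a - c ∨ x = a - (c + 1) ∨ x = a - (c + 3) := by
    intro x hx
    rw [← h] at hx
    simpa [chiralTriple, eq_comm] using hx
  have e0 := mem d (by simp [chiralTriple])
  have e1 := mem (d + 1) (by simp [chiralTriple])
  have e3 := mem (d + 3) (by simp [chiralTriple])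
  -- each of the 27 cases forces one of `1, …, 5` to vanish
  grind

theorem mem_Cgroup_of_image_mem_cycleFamily (hn : 6 ≤ n) {σ : Equiv.Perm (Fin n)}
    (hσ : ∀ s ∈ cycleFamily n, σ '' s ∈ cycleFamily n) : σ ∈ Cgroup n := by
  have h2 : (2 : Fin n) ≠ 0 := by
    exact_mod_cast Fin.natCast_ne_zero_of_lt (k := 2) (by norm_num) (by omega)
  have hadj := map_adjacent_of_image_mem_cycleFamily (by omega) hσ
  have hσc := eq_add_mul_of_map_add_one_sub (map_add_one_sub_eq_of_adjacent σ.injective h2 hadj)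
  rcases hadj 0 with h | h <;> rw [zero_add] at h <;> simp only [h] at hσc
  · exact mem_Cgroup_iff.mpr ⟨σ 0, Equiv.ext fun c ↦ by rw [hσc]; simp [add_comm]⟩
  · have hcard : (σ '' chiralTriple 0).ncard = 3 := by
      rw [Set.ncard_image_of_injective _ σ.injective, ncard_chiralTriple (by omega)]
    obtain ⟨d, hd⟩ :=
      mem_range_chiralTriple_of_ncard_eq_three (by omega) (hσ _ (Or.inr ⟨0, rfl⟩)) hcard
    have hrefl : ⇑σ = (σ 0 - ·) := funext fun c ↦ by rw [hσc]; ring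
    exact absurd (hrefl ▸ hd.symm) (image_sub_chiralTriple_ne hn (σ 0) 0 d)

theorem symmGroup_familyIndicator_cycleFamily (hn : 6 ≤ n) :
    symmGroup (familyIndicator (cycleFamily n)) = Cgroup n := by
  ext σ
  rw [mem_symmGroup_familyIndicator_iff]
  constructor
  · exact fun hσ ↦ mem_Cgroup_of_image_mem_cycleFamily hn fun s hs ↦ (hσ s).mpr hs
  · intro hσ
    obtain ⟨k, rfl⟩ := mem_Cgroup_iff.mp hσ
    exact image_addRight_mem_cycleFamily_iff k

end Cycle

theorem cyclic_representable (n : ℕ) (hn : n ∉ ({3, 4, 5} : Set ℕ)) :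
    Representable 2 (Cgroup n) := by
  rcases le_or_gt n 2 with hsmall | hlarge
  · exact ⟨fun _ ↦ 0, by rw [Cgroup_eq_top hsmall, symmGroup_const]⟩
  · have : NeZero n := ⟨by omega⟩
    have h6 : 6 ≤ n := by simp only [Set.mem_insert_iff, Set.mem_singleton_iff] at hn; omega
    exact ⟨familyIndicator (cycleFamily n), (symmGroup_familyIndicator_cycleFamily h6).symm⟩
end

section
/- Let k ≥ 2, let α and β be finite types each with at least 2 elements, and let G ≤ Equiv.Perm α and H ≤ Equiv.Perm β be k-representable subgroups. Then for every r with r² ≥ k, the direct sum G ⊕ H, a subgroup of Equiv.Perm (α ⊕ β), is r-representable. -/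
/-!
Since `k ≤ r²`, every value of `f` or `g` is a pair of digits in `Fin r`. For `x : α ⊕ β → Bool`
let `a` and `b` be the numbers of `true` entries on `α` and on `β`. The new function depends only
on `a`, `b`, `f (x ∘ inl)` and `g (x ∘ inr)`: on the edges `b = 0` and `b = |β|` of the rectangle
`[0, |α|] × [0, |β|]` it shows the two digits of `f`, on the edges `a = 0` and `a = |α|` those of
`g`, and its value at `(2, 0)` differs from its values at `(1, 1)` and `(0, 2)`. A symmetry `π`
therefore maps `α` onto `α`, since otherwise it carries an input of weights `(2, 0)` to one of
weights `(1, 1)` or `(0, 2)`; so `π = σ ⊕ τ`. On the edges of `f` the value does not depend on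
`g`, so comparing `x` with `x ∘ π` there reads off both digits of `f (u ∘ σ)` and of `f u`,
whence `σ ∈ G(f)`; symmetrically `τ ∈ G(g)`.
-/

lemma mem_symmGroup {α V : Type*} {f : (α → Bool) → V} {σ : Equiv.Perm α} :
    σ ∈ symmGroup f ↔ ∀ x : α → Bool, f (x ∘ σ) = f x := Iff.rfl

lemma symmGroup_comp_of_injective {α V W : Type*} {d : V → W} (hd : Function.Injective d)
    (f : (α → Bool) → V) : symmGroup (d ∘ f) = symmGroup f := by
  ext σ
  simp only [mem_symmGroup, Function.comp_apply, hd.eq_iff]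

section Weight

variable {γ : Type*} [Fintype γ]

def weight (x : γ → Bool) : ℕ := (Finset.univ.filter fun c => x c = true).card

lemma weight_comp_perm (x : γ → Bool) (σ : Equiv.Perm γ) : weight (x ∘ σ) = weight x := by
  simp only [weight, ← Fintype.card_subtype]
  exact Fintype.card_congr (σ.subtypeEquiv fun _ => Iff.rfl)

lemma weight_le_card (x : γ → Bool) : weight x ≤ Fintype.card γ :=
  Finset.card_filter_le _ _

lemma weight_eq_zero_iff {x : γ → Bool} : weight x = 0 ↔ x = fun _ => false := by
  simp [weight, Finset.filter_eq_empty_iff, funext_iff]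

lemma weight_eq_card_iff {x : γ → Bool} : weight x = Fintype.card γ ↔ x = fun _ => true := by
  simp [weight, Finset.card_eq_iff_eq_univ, Finset.filter_eq_self, funext_iff]

lemma weight_mem [DecidableEq γ] (s : Finset γ) : weight (fun c => decide (c ∈ s)) = s.card := by
  simp [weight]

lemma exists_weight_eq {b : ℕ} (hb : b ≤ Fintype.card γ) : ∃ x : γ → Bool, weight x = b := by
  classical
  obtain ⟨s, -, hs⟩ := Finset.exists_subset_card_eq (s := Finset.univ) hb
  exact ⟨_, (weight_mem s).trans hs⟩

lemma weight_comp_inl_add_weight_comp_inr {β : Type*} [Fintype β] (x : γ ⊕ β → Bool) :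
    weight (x ∘ Sum.inl) + weight (x ∘ Sum.inr) = weight x := by
  simp only [weight, Finset.card_filter, Fintype.sum_sum_type, Function.comp_apply]

end Weight

section Code

variable {V : Type*} [Zero V] [One V]

/-- The weight-two points are reserved to tell the two summands apart, so the first digit of `p`
at `a = 2` and of `q` at `b = 2` is shown at `(2, 1)` and at `(1, 2)` instead. -/
def code (n m : ℕ) (p q : V × V) (a b : ℕ) : V :=
  if a = 2 ∧ b = 0 then 1
  else if a + b = 2 then 0
  else if 0 < a ∧ a < n ∧ b = m then p.2
  else if 0 < b ∧ b < m ∧ a = n then q.2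
  else if 0 < a ∧ a < n ∧ (b = 0 ∨ a = 2 ∧ b = 1) then p.1
  else if 0 < b ∧ b < m ∧ (a = 0 ∨ b = 2 ∧ a = 1) then q.1
  else 0

variable {n m : ℕ} {p q : V × V}

lemma code_two_zero : code n m p q 2 0 = 1 := by
  simp [code]

lemma code_of_add_eq_two {a b : ℕ} (hab : a + b = 2) (hb : b ≠ 0) : code n m p q a b = 0 := by
  unfold code
  rw [if_neg (by omega), if_pos hab]

lemma code_top {a : ℕ} (ha : 0 < a) (han : a < n) (hm : 2 ≤ m) : code n m p q a m = p.2 := by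
  unfold code
  split_ifs <;> first | rfl | omega

lemma code_bottom {a : ℕ} (ha : 0 < a) (han : a < n) (hm : 2 ≤ m) :
    code n m p q a (if a = 2 then 1 else 0) = p.1 := by
  unfold code
  split_ifs <;> first | rfl | omega | simp_all

lemma code_right {b : ℕ} (hb : 0 < b) (hbm : b < m) (hn : 2 ≤ n) : code n m p q n b = q.2 := by
  unfold code
  split_ifs <;> first | rfl | omega

lemma code_left {b : ℕ} (hb : 0 < b) (hbm : b < m) (hn : 2 ≤ n) :
    code n m p q (if b = 2 then 1 else 0) b = q.1 := by
  unfold code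
  split_ifs <;> first | rfl | omega

end Code

section Glue

variable {α β V : Type*} [Fintype α] [Fintype β]

lemma mem_symmGroup_of_forall_weight_pos_lt {P : (α → Bool) → V} {σ : Equiv.Perm α}
    (h : ∀ u, 0 < weight u → weight u < Fintype.card α → P (u ∘ σ) = P u) :
    σ ∈ symmGroup P := by
  intro u
  rcases Nat.eq_zero_or_pos (weight u) with h0 | hpos
  · rw [weight_eq_zero_iff.mp h0]; rfl
  rcases (weight_le_card u).eq_or_lt with hcard | hlt
  · rw [weight_eq_card_iff.mp hcard]; rfl
  exact h u hpos hlt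

lemma apply_comp_perm_eq_of_reads_digits {W : Type*} {P : (α → Bool) → V × V} {Q : (β → Bool) → W}
    {C : V × V → W → ℕ → ℕ → V} {σ : Equiv.Perm α} {τ : Equiv.Perm β}
    (hC : ∀ u v, C (P (u ∘ σ)) (Q (v ∘ τ)) (weight u) (weight v) =
      C (P u) (Q v) (weight u) (weight v))
    {u : α → Bool} {b₁ b₂ : ℕ} (hb₁ : b₁ ≤ Fintype.card β) (hb₂ : b₂ ≤ Fintype.card β)
    (h₁ : ∀ p q, C p q (weight u) b₁ = p.1) (h₂ : ∀ p q, C p q (weight u) b₂ = p.2) :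
    P (u ∘ σ) = P u := by
  obtain ⟨v₁, rfl⟩ := exists_weight_eq hb₁
  obtain ⟨v₂, rfl⟩ := exists_weight_eq hb₂
  have e₁ := hC u v₁
  have e₂ := hC u v₂
  rw [h₁, h₁] at e₁
  rw [h₂, h₂] at e₂
  exact Prod.ext e₁ e₂

variable [Zero V] [One V]

def glue (P : (α → Bool) → V × V) (Q : (β → Bool) → V × V) : (α ⊕ β → Bool) → V :=
  fun x => code (Fintype.card α) (Fintype.card β) (P (x ∘ Sum.inl)) (Q (x ∘ Sum.inr))
    (weight (x ∘ Sum.inl)) (weight (x ∘ Sum.inr))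

variable {P : (α → Bool) → V × V} {Q : (β → Bool) → V × V}

lemma glue_elim (u : α → Bool) (v : β → Bool) :
    glue P Q (Sum.elim u v) =
      code (Fintype.card α) (Fintype.card β) (P u) (Q v) (weight u) (weight v) := rfl

lemma glue_elim_comp_sumCongr {σ : Equiv.Perm α} {τ : Equiv.Perm β} (u : α → Bool)
    (v : β → Bool) : glue P Q (Sum.elim u v ∘ Equiv.sumCongr σ τ) =
      code (Fintype.card α) (Fintype.card β) (P (u ∘ σ)) (Q (v ∘ τ)) (weight u) (weight v) := by
  rw [← weight_comp_perm u σ, ← weight_comp_perm v τ, ← glue_elim]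
  congr 1
  ext (a | b) <;> rfl

lemma directSum_le_symmGroup_glue :
    directSum (symmGroup P) (symmGroup Q) ≤ symmGroup (glue P Q) := by
  rintro _ ⟨⟨σ, τ⟩, ⟨hσ, hτ⟩, rfl⟩ x
  rw [← Sum.elim_comp_inl_inr x, Equiv.Perm.sumCongrHom_apply, glue_elim_comp_sumCongr,
    glue_elim, mem_symmGroup.mp hσ, mem_symmGroup.mp hτ]

lemma mapsTo_inl_of_mem_symmGroup_glue (h01 : (0 : V) ≠ 1) (hα : 2 ≤ Fintype.card α)
    {π : Equiv.Perm (α ⊕ β)} (hπ : π ∈ symmGroup (glue P Q)) :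
    Set.MapsTo π (Set.range Sum.inl) (Set.range Sum.inl) := by
  classical
  rintro _ ⟨a, rfl⟩
  obtain ⟨s, has, -, hs⟩ := Finset.exists_subsuperset_card_eq (Finset.subset_univ {a})
    (by simp : ({a} : Finset α).card ≤ 2) (by simpa using hα)
  set x : α ⊕ β → Bool := Sum.elim (fun c => decide (c ∈ s)) fun _ => false
  -- `x = y ∘ π` has weights `(2, 0)`, while `y` would have weights `(1, 1)` or `(0, 2)`
  -- if `π (inl a)` lay in `β`.
  set y := x ∘ π.symm
  have hxy : glue P Q x = glue P Q y := by
    rw [← mem_symmGroup.mp hπ y]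
    congr 1
    ext z
    simp [y]
  by_contra hl
  obtain ⟨d, hd⟩ : ∃ d, π (Sum.inl a) = Sum.inr d := by
    cases h : π (Sum.inl a) with
    | inl c => exact absurd ⟨c, h.symm⟩ hl
    | inr d => exact ⟨d, rfl⟩
  have hy2 : weight (y ∘ Sum.inl) + weight (y ∘ Sum.inr) = 2 := by
    rw [weight_comp_inl_add_weight_comp_inr, weight_comp_perm,
      ← weight_comp_inl_add_weight_comp_inr]
    simp [x, weight_mem, hs, weight_eq_zero_iff]
  have hyβ : weight (y ∘ Sum.inr) ≠ 0 := by
    rw [Ne, weight_eq_zero_iff, funext_iff, not_forall]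
    exact ⟨d, by simp [y, x, ← hd, Finset.singleton_subset_iff.mp has]⟩
  have hx : glue P Q x = 1 := by
    rw [glue_elim, weight_mem, hs, weight_eq_zero_iff.mpr rfl, code_two_zero]
  have hy : glue P Q y = 0 := code_of_add_eq_two hy2 hyβ
  exact h01 (hy ▸ hx ▸ hxy).symm

theorem symmGroup_glue (h01 : (0 : V) ≠ 1) (hα : 2 ≤ Fintype.card α)
    (hβ : 2 ≤ Fintype.card β) : symmGroup (glue P Q) = directSum (symmGroup P) (symmGroup Q) := by
  refine le_antisymm (fun π hπ => ?_) directSum_le_symmGroup_glue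
  obtain ⟨⟨σ, τ⟩, rfl⟩ :=
    Equiv.Perm.mem_sumCongrHom_range_of_perm_mapsTo_inl
      (mapsTo_inl_of_mem_symmGroup_glue h01 hα hπ)
  have hinv : ∀ u v, code (Fintype.card α) (Fintype.card β) (P (u ∘ σ)) (Q (v ∘ τ)) (weight u)
      (weight v) = code (Fintype.card α) (Fintype.card β) (P u) (Q v) (weight u) (weight v) :=
    fun u v => by
      rw [← glue_elim_comp_sumCongr, ← glue_elim]
      exact hπ (Sum.elim u v)
  refine ⟨(σ, τ), ⟨?_, ?_⟩, rfl⟩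
  · exact mem_symmGroup_of_forall_weight_pos_lt fun u hu hun =>
      apply_comp_perm_eq_of_reads_digits hinv (b₁ := if weight u = 2 then 1 else 0)
        (by split_ifs <;> omega) le_rfl (fun _ _ => code_bottom hu hun hβ)
        (fun _ _ => code_top hu hun hβ)
  · exact mem_symmGroup_of_forall_weight_pos_lt fun v hv hvm =>
      apply_comp_perm_eq_of_reads_digits (C := fun q p b a => code _ _ p q a b)
        (fun v u => hinv u v) (b₁ := if weight v = 2 then 1 else 0)
        (by split_ifs <;> omega) le_rfl (fun _ _ => code_left hv hvm hα)
        (fun _ _ => code_right hv hvm hα)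

end Glue

theorem directSum_representable
    {α β : Type*} [Fintype α] [Fintype β] (k : ℕ) (hk : 2 ≤ k)
    (hα : 2 ≤ Fintype.card α) (hβ : 2 ≤ Fintype.card β)
    (G : Subgroup (Equiv.Perm α)) (H : Subgroup (Equiv.Perm β))
    (hG : Representable k G) (hH : Representable k H)
    (r : ℕ) (hr : k ≤ r ^ 2) :
    Representable r (directSum G H) := by
  obtain ⟨f, rfl⟩ := hG
  obtain ⟨g, rfl⟩ := hH
  have hr2 : 2 ≤ r := by
    by_contra! h
    interval_cases r <;> omega
  obtain ⟨s, rfl⟩ : ∃ s, r = s + 2 := ⟨r - 2, by omega⟩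
  let digits : Fin k → Fin (s + 2) × Fin (s + 2) :=
    finProdFinEquiv.symm ∘ Fin.castLE (by rwa [← sq])
  have hd : digits.Injective := finProdFinEquiv.symm.injective.comp (Fin.castLE_injective _)
  refine ⟨glue (digits ∘ f) (digits ∘ g), ?_⟩
  rw [symmGroup_glue Fin.zero_ne_one' hα hβ, symmGroup_comp_of_injective hd,
    symmGroup_comp_of_injective hd]
end

section
/- Let α be a finite type and let H be a subgroup of Equiv.Perm α that is a direct sum of regular groups. If S is a subset of α containing exactly one element of each orbit of the action of H on α, then S is regular in H. -/
theorem apply_eq_self_of_image_selector_eq {α : Type*} {H : Subgroup (Equiv.Perm α)} {S : Set α}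
    (hS : ∀ a : α, ∃! s : α, s ∈ S ∧ ∃ σ ∈ H, σ a = s) {π : Equiv.Perm α} (hπ : π ∈ H)
    (hπS : ⇑π '' S = S) {s : α} (hs : s ∈ S) : π s = s :=
  (hS s).unique ⟨hπS ▸ Set.mem_image_of_mem π hs, π, hπ, rfl⟩ ⟨hs, 1, H.one_mem, rfl⟩

namespace IsDirectSumOfRegular

variable {α ι : Type*} {β : ι → Type*} {G : ∀ i, Subgroup (Equiv.Perm (β i))}
  {e : α ≃ Σ i, β i} {π : Equiv.Perm α} {g : ∀ i, Equiv.Perm (β i)}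

theorem fst_apply_eq (hπe : ∀ a, e (π a) = ⟨(e a).1, g (e a).1 (e a).2⟩) (a : α) :
    (e (π a)).1 = (e a).1 := by
  rw [hπe]

theorem component_eq_one_of_apply_eq_self (hreg : ∀ i, IsRegularPermGroup (G i))
    (hg : ∀ i, g i ∈ G i) (hπe : ∀ a, e (π a) = ⟨(e a).1, g (e a).1 (e a).2⟩) {b : α}
    (hb : π b = b) : g (e b).1 = 1 := by
  have hfix : g (e b).1 (e b).2 = (e b).2 := by
    have h := hπe b
    rw [hb] at h
    exact (eq_of_heq (Sigma.ext_iff.1 h).2).symm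
  exact (hreg _).2 _ (hg _) _ hfix

theorem apply_eq_self_of_apply_eq_self {H : Subgroup (Equiv.Perm α)} (hH : IsDirectSumOfRegular H)
    {π σ : Equiv.Perm α} (hπ : π ∈ H) (hσ : σ ∈ H) {a : α} (h : π (σ a) = σ a) : π a = a := by
  obtain ⟨ι, _, β, _, e, G, hreg, hmem⟩ := hH
  obtain ⟨g, hg, hπe⟩ := (hmem π).1 hπ
  obtain ⟨_, _, hσe⟩ := (hmem σ).1 hσ
  have hblock : g (e a).1 = 1 := by
    rw [← fst_apply_eq hσe a]
    exact component_eq_one_of_apply_eq_self hreg hg hπe h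
  apply e.injective
  rw [hπe, hblock]
  rfl

end IsDirectSumOfRegular

theorem selector_regular_in_directSumOfRegular_general
    {α : Type*} (H : Subgroup (Equiv.Perm α))
    (hH : IsDirectSumOfRegular H) (S : Set α)
    (hS : ∀ a : α, ∃! s : α, s ∈ S ∧ ∃ σ ∈ H, σ a = s) :
    IsRegularSet S H := by
  intro π hπ hπS
  ext a
  obtain ⟨s, ⟨hsS, σ, hσ, rfl⟩, -⟩ := hS a
  exact hH.apply_eq_self_of_apply_eq_self hπ hσ
    (apply_eq_self_of_image_selector_eq hS hπ hπS hsS)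

theorem selector_regular_in_directSumOfRegular
    {α : Type*} [Fintype α] (H : Subgroup (Equiv.Perm α))
    (hH : IsDirectSumOfRegular H) (S : Set α)
    (hS : ∀ a : α, ∃! s : α, s ∈ S ∧ ∃ σ ∈ H, σ a = s) :
    IsRegularSet S H :=
  selector_regular_in_directSumOfRegular_general H hH S hS
end

section
/- Let i ∈ {3,4,5}, let β be a finite type, and let H be a regular subgroup of Equiv.Perm β. Let M be a normal subgroup of C_i, N a normal subgroup of H, φ : C_i ⧸ M ≃* H ⧸ N a group isomorphism, and let G = C_i/M ⊕_φ H/N be the corresponding nontrivial subdirect sum (a subgroup of Equiv.Perm (Fin i ⊕ β), nontrivial meaning M ≠ C_i). If H is 2-representable, then G is 2-representable. -/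
/-!
Write `C = ⟨ρ⟩` and let `ψ : C → H ⧸ N` be `φ` composed with the quotient map; `ψ ρ ≠ 1` since
`M ≠ C`. Both `C` and `H` act regularly, so fixing base points labels every point of `α` and of `β`
by an element of `H ⧸ N` in such a way that `g ∈ C` multiplies the labels on `α` by `ψ g` and
`h ∈ H` multiplies the labels on `β` by `h N`.

If `f` represents `H`, take the function that agrees with `f` on the `β`-half of inputs that are
constantly `true` on `α`, is `1` on the marker configurations — one point of `α`; a point of `α`
and a point of `β` with equal labels; an edge `{a, ρ a}` and a point of `β` labelled like `a` —
and is `0` elsewhere (with at least three points in `α`, no marker is constantly `true` on `α`).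
Elements of the subdirect sum preserve labels up to a common factor and commute with `ρ`, so they
are symmetries. Conversely, testing a symmetry on single points of `α` shows that it is
some `σ ⊕ τ`; testing it on inputs constantly `true` on `α` gives `τ ∈ H`; the pairs show that `σ`
multiplies all labels on `α` by `τ N`; and `σ` maps each edge `{a, ρ a}` to `{σ a, ρ (σ a)}`, not
to the reversed edge, because `a` and `ρ a` carry different labels. Hence `σ` commutes with `ρ`, so `σ ∈ C`, and `ψ σ = τ N`.
-/

open Equiv Set

section PermGroup

variable {α : Type*} {G : Subgroup (Perm α)}

theorem IsRegularPermGroup.eq_of_apply_eq (hG : IsRegularPermGroup G) {g h : Perm α}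
    (hg : g ∈ G) (hh : h ∈ G) {a : α} (hgh : g a = h a) : g = h := by
  have : h⁻¹ * g = 1 := hG.2 _ (mul_mem (inv_mem hh) hg) a (by simp [Perm.mul_apply, hgh])
  exact (inv_mul_eq_one.mp this).symm

theorem IsRegularPermGroup.exists_label (hG : IsRegularPermGroup G) (a₀ : α) {Q : Type*}
    [Group Q] (ψ : G →* Q) :
    ∃ ℓ : α → Q, ℓ a₀ = 1 ∧ ∀ (g : G) (a : α), ℓ ((g : Perm α) a) = ψ g * ℓ a := by
  choose g hgG hga₀ using hG.1 a₀
  have hg : ∀ (x : G) a, g ((x : Perm α) a) = x * g a := fun x a =>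
    hG.eq_of_apply_eq (a := a₀) (hgG _) (mul_mem x.2 (hgG a)) (by simp [Perm.mul_apply, hga₀])
  refine ⟨fun a => ψ ⟨g a, hgG a⟩, ?_, fun x a => ?_⟩
  · have : g a₀ = 1 := hG.eq_of_apply_eq (a := a₀) (hgG a₀) (one_mem G) (by simp [hga₀])
    simp only [this]
    exact map_one ψ
  · rw [← map_mul]
    exact congrArg ψ (Subtype.ext (hg x a))

theorem eq_of_forall_commute_of_apply_eq (hG : ∀ a b, ∃ g ∈ G, g a = b) {σ τ : Perm α}
    (hσ : ∀ g ∈ G, Commute σ g) (hτ : ∀ g ∈ G, Commute τ g) {a : α} (h : σ a = τ a) :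
    σ = τ := by
  ext x
  obtain ⟨g, hg, rfl⟩ := hG a x
  rw [← Perm.mul_apply, (hσ g hg).eq, Perm.mul_apply, h, ← Perm.mul_apply, ← (hτ g hg).eq,
    Perm.mul_apply]

theorem mem_of_forall_commute (hG : ∀ a b, ∃ g ∈ G, g a = b)
    (hcomm : ∀ g ∈ G, ∀ h ∈ G, Commute g h) {σ : Perm α} (hσ : ∀ g ∈ G, Commute σ g) :
    σ ∈ G := by
  cases isEmpty_or_nonempty α with
  | inl _ => exact Subsingleton.elim 1 σ ▸ one_mem G
  | inr h =>
    obtain ⟨a⟩ := h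
    obtain ⟨g, hg, hga⟩ := hG a (σ a)
    rwa [eq_of_forall_commute_of_apply_eq hG hσ (hcomm g hg) hga.symm]

theorem isRegularPermGroup_of_forall_commute (hG : ∀ a b, ∃ g ∈ G, g a = b)
    (hcomm : ∀ g ∈ G, ∀ h ∈ G, Commute g h) : IsRegularPermGroup G :=
  ⟨hG, fun g hg _ hga =>
    eq_of_forall_commute_of_apply_eq hG (hcomm g hg) (fun _ _ => Commute.one_left _) hga⟩

end PermGroup

section Zpowers

variable {α : Type*} {ρ σ : Perm α}

theorem commute_of_mem_zpowers (h : σ ∈ Subgroup.zpowers ρ) : Commute σ ρ := by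
  obtain ⟨k, rfl⟩ := Subgroup.mem_zpowers_iff.mp h
  exact (Commute.refl ρ).zpow_left k

theorem forall_commute_zpowers (h : Commute σ ρ) : ∀ g ∈ Subgroup.zpowers ρ, Commute σ g := by
  intro g hg
  obtain ⟨k, rfl⟩ := Subgroup.mem_zpowers_iff.mp hg
  exact h.zpow_right k

variable (hρ : ∀ a b, ∃ g ∈ Subgroup.zpowers ρ, g a = b)
include hρ

theorem mem_zpowers_of_commute (h : Commute σ ρ) : σ ∈ Subgroup.zpowers ρ :=
  mem_of_forall_commute hρ (fun _ hg => forall_commute_zpowers (commute_of_mem_zpowers hg))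
    (forall_commute_zpowers h)

theorem isRegularPermGroup_zpowers : IsRegularPermGroup (Subgroup.zpowers ρ) :=
  isRegularPermGroup_of_forall_commute hρ
    fun _ hg => forall_commute_zpowers (commute_of_mem_zpowers hg)

end Zpowers

theorem Subgroup.eq_top_of_zpowers_generator_mem {G : Type*} [Group G] {ρ : G}
    {K : Subgroup (Subgroup.zpowers ρ)} (h : ⟨ρ, Subgroup.mem_zpowers ρ⟩ ∈ K) : K = ⊤ := by
  refine eq_top_iff.mpr fun x _ => ?_
  obtain ⟨k, hk⟩ := Subgroup.mem_zpowers_iff.mp x.2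
  have : x = ⟨ρ, Subgroup.mem_zpowers ρ⟩ ^ k := Subtype.ext (by simp [hk])
  exact this ▸ zpow_mem h k

theorem exists_zpowers_finRotate_apply_eq {n : ℕ} (hn : 2 ≤ n) (a b : Fin n) :
    ∃ g ∈ Subgroup.zpowers (finRotate n), g a = b := by
  have hsupp : ∀ x, finRotate n x ≠ x := fun x =>
    Perm.mem_support.mp (by simp [support_finRotate_of_le hn])
  obtain ⟨k, hk⟩ := (isCycle_finRotate_of_le hn).exists_zpow_eq (hsupp a) (hsupp b)
  exact ⟨_, Subgroup.zpow_mem_zpowers _ k, hk⟩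

theorem Set.pair_ne_univ {α : Type*} (hα : 2 < Nat.card α) (a b : α) :
    ({a, b} : Set α) ≠ univ := by
  intro h
  have := ncard_insert_le a {b}
  rw [h, ncard_univ, ncard_singleton] at this
  omega

theorem Set.singleton_ne_univ_of_two_lt_card {α : Type*} (hα : 2 < Nat.card α) (a : α) :
    ({a} : Set α) ≠ univ :=
  pair_eq_singleton a ▸ pair_ne_univ hα a a

theorem apply_inv_eq_inv_mul_of_forall {γ Q : Type*} [Group Q] {π : Perm γ} {ℓ : γ → Q} {c : Q}
    (h : ∀ x, ℓ (π x) = c * ℓ x) (x : γ) : ℓ (π⁻¹ x) = c⁻¹ * ℓ x := by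
  rw [eq_inv_mul_iff_mul_eq, ← h]
  exact congrArg ℓ (π.apply_symm_apply x)

section Marker

variable {α β Q : Type*} (ρ : Perm α) (ℓα : α → Q) (ℓβ : β → Q)

def IsMarker (s : Set α) (t : Set β) : Prop :=
  (∃ a, s = {a} ∧ t = ∅) ∨ ∃ a b, ℓα a = ℓβ b ∧ t = {b} ∧ (s = {a} ∨ s = {a, ρ a})

variable (f : (β → Bool) → Fin 2)

open scoped Classical in
noncomputable def markerValue (s : Set α) (t : Set β) : Fin 2 :=
  if s = univ then f (fun b => decide (b ∈ t)) else if IsMarker ρ ℓα ℓβ s t then 1 else 0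

noncomputable def markerFun (z : α ⊕ β → Bool) : Fin 2 :=
  markerValue ρ ℓα ℓβ f {a | z (.inl a) = true} {b | z (.inr b) = true}

variable {ρ ℓα ℓβ f} {σ : Perm α} {τ : Perm β}

section Invariance

variable [Group Q]

theorem IsMarker.image {c : Q} (hσρ : Commute σ ρ) (hσ : ∀ a, ℓα (σ a) = c * ℓα a)
    (hτ : ∀ b, ℓβ (τ b) = c * ℓβ b) {s : Set α} {t : Set β} (h : IsMarker ρ ℓα ℓβ s t) :
    IsMarker ρ ℓα ℓβ (σ '' s) (τ '' t) := by
  rcases h with ⟨a, rfl, rfl⟩ | ⟨a, b, hab, rfl, rfl | rfl⟩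
  · exact Or.inl ⟨σ a, image_singleton, image_empty _⟩
  · exact Or.inr ⟨σ a, τ b, by rw [hσ, hτ, hab], image_singleton, Or.inl image_singleton⟩
  · refine Or.inr ⟨σ a, τ b, by rw [hσ, hτ, hab], image_singleton, Or.inr ?_⟩
    rw [image_pair, ← Perm.mul_apply, hσρ.eq, Perm.mul_apply]

theorem isMarker_preimage_iff {c : Q} (hσρ : Commute σ ρ) (hσ : ∀ a, ℓα (σ a) = c * ℓα a)
    (hτ : ∀ b, ℓβ (τ b) = c * ℓβ b) {s : Set α} {t : Set β} :
    IsMarker ρ ℓα ℓβ (σ ⁻¹' s) (τ ⁻¹' t) ↔ IsMarker ρ ℓα ℓβ s t := by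
  refine ⟨fun h => ?_, fun h => ?_⟩
  · simpa only [Equiv.image_preimage] using h.image hσρ hσ hτ
  · simpa only [Perm.inv_def, Equiv.image_symm_eq_preimage] using
      h.image hσρ.inv_left (apply_inv_eq_inv_mul_of_forall hσ) (apply_inv_eq_inv_mul_of_forall hτ)

theorem markerValue_preimage {c : Q} (hσρ : Commute σ ρ) (hσ : ∀ a, ℓα (σ a) = c * ℓα a)
    (hτ : ∀ b, ℓβ (τ b) = c * ℓβ b) (hf : τ ∈ symmGroup f) (s : Set α) (t : Set β) :
    markerValue ρ ℓα ℓβ f (σ ⁻¹' s) (τ ⁻¹' t) = markerValue ρ ℓα ℓβ f s t := by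
  classical
  have hs : σ ⁻¹' s = univ ↔ s = univ := σ.surjective.preimage_injective.eq_iff' preimage_univ
  simp only [markerValue, hs, isMarker_preimage_iff hσρ hσ hτ]
  rw [show f (fun b => decide (b ∈ τ ⁻¹' t)) = f (fun b => decide (b ∈ t)) from
    hf fun b => decide (b ∈ t)]

theorem sumCongr_mem_symmGroup_markerFun {c : Q} (hσρ : Commute σ ρ)
    (hσ : ∀ a, ℓα (σ a) = c * ℓα a) (hτ : ∀ b, ℓβ (τ b) = c * ℓβ b) (hf : τ ∈ symmGroup f) :
    sumCongr σ τ ∈ symmGroup (markerFun ρ ℓα ℓβ f) :=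
  fun z => markerValue_preimage hσρ hσ hτ hf {a | z (.inl a) = true} {b | z (.inr b) = true}

end Invariance

theorem not_isMarker_empty (t : Set β) : ¬ IsMarker ρ ℓα ℓβ ∅ t := by
  rintro (⟨a, h, -⟩ | ⟨a, b, -, -, h | h⟩)
  · exact singleton_ne_empty a h.symm
  · exact singleton_ne_empty a h.symm
  · exact (insert_nonempty a _).ne_empty h.symm

theorem isMarker_singleton_singleton_iff (hρ : ∀ a, ρ a ≠ a) {a : α} {b : β} :
    IsMarker ρ ℓα ℓβ {a} {b} ↔ ℓα a = ℓβ b := by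
  refine ⟨?_, fun h => Or.inr ⟨a, b, h, rfl, Or.inl rfl⟩⟩
  rintro (⟨a', -, h⟩ | ⟨a', b', hab, hb, ha | ha⟩)
  · exact absurd h (singleton_ne_empty b)
  · rwa [singleton_eq_singleton_iff.mp ha, singleton_eq_singleton_iff.mp hb]
  · have h₁ : a' ∈ ({a} : Set α) := ha ▸ mem_insert a' _
    have h₂ : ρ a' ∈ ({a} : Set α) := ha ▸ mem_insert_of_mem a' rfl
    exact absurd ((mem_singleton_iff.mp h₂).trans (mem_singleton_iff.mp h₁).symm) (hρ a')

theorem IsMarker.exists_edge {a₁ a₂ : α} {b : β} (h : IsMarker ρ ℓα ℓβ {a₁, a₂} {b})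
    (hne : a₁ ≠ a₂) : ∃ e, ({a₁, a₂} : Set α) = {e, ρ e} ∧ ℓα e = ℓβ b := by
  rcases h with ⟨a, -, h⟩ | ⟨e, b', he, hb, h | h⟩
  · exact absurd h (singleton_ne_empty b)
  · have h' := (eq_singleton_iff_unique_mem.mp h).2
    exact absurd ((h' a₁ (by simp)).trans (h' a₂ (by simp)).symm) hne
  · exact ⟨e, h, singleton_eq_singleton_iff.mp hb ▸ he⟩

theorem markerValue_eq_one_iff {s : Set α} (hs : s ≠ univ) (t : Set β) :
    markerValue ρ ℓα ℓβ f s t = 1 ↔ IsMarker ρ ℓα ℓβ s t := by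
  simp [markerValue, hs]

theorem markerValue_image_of_sumCongr_mem (h : sumCongr σ τ ∈ symmGroup (markerFun ρ ℓα ℓβ f))
    (s : Set α) (t : Set β) :
    markerValue ρ ℓα ℓβ f (σ '' s) (τ '' t) = markerValue ρ ℓα ℓβ f s t := by
  classical
  have := h (Sum.elim (fun a => decide (a ∈ σ '' s)) fun b => decide (b ∈ τ '' t))
  simp only [markerFun, Function.comp_apply, sumCongr_apply, Sum.map_inl, Sum.map_inr,
    Sum.elim_inl, Sum.elim_inr, decide_eq_true_eq, σ.injective.mem_set_image,
    τ.injective.mem_set_image, ofPred_mem_eq] at this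
  exact this.symm

theorem isMarker_image_iff_of_sumCongr_mem (h : sumCongr σ τ ∈ symmGroup (markerFun ρ ℓα ℓβ f))
    {s : Set α} (hs : s ≠ univ) (t : Set β) :
    IsMarker ρ ℓα ℓβ (σ '' s) (τ '' t) ↔ IsMarker ρ ℓα ℓβ s t := by
  have hσs : σ '' s ≠ univ := fun h' => hs (by rw [← σ.preimage_image s, h', preimage_univ])
  rw [← markerValue_eq_one_iff (f := f) hσs, ← markerValue_eq_one_iff (f := f) hs,
    markerValue_image_of_sumCongr_mem h]

theorem mem_symmGroup_of_sumCongr_mem (h : sumCongr σ τ ∈ symmGroup (markerFun ρ ℓα ℓβ f)) :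
    τ ∈ symmGroup f := by
  intro y
  simpa [markerValue, Function.comp_def] using
    (markerValue_image_of_sumCongr_mem h univ (τ ⁻¹' {b | y b = true})).symm

variable (hα : 2 < Nat.card α)
include hα

theorem apply_label_eq_of_sumCongr_mem (hρ : ∀ a, ρ a ≠ a)
    (h : sumCongr σ τ ∈ symmGroup (markerFun ρ ℓα ℓβ f)) {a : α} {b : β} (hab : ℓα a = ℓβ b) :
    ℓα (σ a) = ℓβ (τ b) := by
  have := (isMarker_image_iff_of_sumCongr_mem h (singleton_ne_univ_of_two_lt_card hα a) {b}).mpr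
    ((isMarker_singleton_singleton_iff hρ).mpr hab)
  rwa [image_singleton, image_singleton, isMarker_singleton_singleton_iff hρ] at this

theorem commute_of_sumCongr_mem [Group Q] (hρ : ∀ a, ℓα (ρ a) ≠ ℓα a)
    (hℓ : ∀ a, ∃ b, ℓβ b = ℓα a) (h : sumCongr σ τ ∈ symmGroup (markerFun ρ ℓα ℓβ f)) :
    Commute σ ρ := by
  have hρ' : ∀ a, ρ a ≠ a := fun a h' => hρ a (congrArg ℓα h')
  ext a
  obtain ⟨b, hb⟩ := hℓ a
  have hedge := (isMarker_image_iff_of_sumCongr_mem h (pair_ne_univ hα a (ρ a)) {b}).mpr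
    (Or.inr ⟨a, b, hb.symm, rfl, Or.inr rfl⟩)
  rw [image_pair, image_singleton] at hedge
  obtain ⟨e, he, hℓe⟩ := hedge.exists_edge (σ.injective.ne (hρ' a).symm)
  have hσa := apply_label_eq_of_sumCongr_mem hα hρ' h hb.symm
  rcases pair_eq_pair_iff.mp he with ⟨h₁, h₂⟩ | ⟨h₁, h₂⟩
  · simp [Perm.mul_apply, h₁, h₂]
  · -- a reversed edge would give `e` and `ρ e` the same label
    exact absurd (h₁ ▸ hσa.trans hℓe.symm) (hρ e)

theorem exists_sumCongr_eq_of_mem [Finite α] [Finite β] {π : Perm (α ⊕ β)}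
    (h : π ∈ symmGroup (markerFun ρ ℓα ℓβ f)) : ∃ σ τ, π = sumCongr σ τ := by
  classical
  have : Nonempty α := Nat.card_pos_iff.mp (by omega) |>.1
  have hleft : MapsTo π (range .inl) (range .inl) := by
    rintro _ ⟨a, rfl⟩
    by_contra hπa
    let z : α ⊕ β → Bool := fun x => decide (x = .inl a)
    have hz : markerFun ρ ℓα ℓβ f z = 1 := by
      have : {a' | z (.inl a') = true} = {a} := by ext; simp [z]
      rw [markerFun, this, markerValue_eq_one_iff (singleton_ne_univ_of_two_lt_card hα a)]
      exact Or.inl ⟨a, rfl, by ext; simp [z]⟩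
    have hzπ : markerFun ρ ℓα ℓβ f (z ∘ ⇑π⁻¹) = 0 := by
      have : {a' | (z ∘ ⇑π⁻¹) (.inl a') = true} = ∅ := by
        ext a'
        simp only [z, Function.comp_apply, decide_eq_true_eq, Perm.inv_eq_iff_eq, mem_ofPred_eq,
          mem_empty_iff_false, iff_false]
        exact fun ha' => hπa ⟨a', ha'⟩
      rw [markerFun, this, markerValue, if_neg empty_ne_univ, if_neg (not_isMarker_empty _)]
    exact zero_ne_one (hzπ.symm.trans ((inv_mem h z).trans hz))
  obtain ⟨⟨σ, τ⟩, rfl⟩ := Perm.mem_sumCongrHom_range_of_perm_mapsTo_inl hleft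
  exact ⟨σ, τ, rfl⟩

end Marker

theorem representable_subdirectSum_zpowers {α β : Type*} [Finite α] [Finite β]
    (hα : 2 < Nat.card α) {ρ : Perm α} (hρ : ∀ a b, ∃ g ∈ Subgroup.zpowers ρ, g a = b)
    (H : Subgroup (Perm β)) (hH : IsRegularPermGroup H) (M : Subgroup (Subgroup.zpowers ρ))
    [hMn : M.Normal] (N : Subgroup H) [N.Normal] (φ : Subgroup.zpowers ρ ⧸ M ≃* H ⧸ N)
    (hM : M ≠ ⊤) (hrep : Representable 2 H) :
    Representable 2 (subdirectSum (Subgroup.zpowers ρ) H M N φ) := by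
  obtain ⟨f, rfl⟩ := hrep
  let ψ : Subgroup.zpowers ρ →* symmGroup f ⧸ N := φ.toMonoidHom.comp (QuotientGroup.mk' M)
  have hψρ : ψ ⟨ρ, Subgroup.mem_zpowers ρ⟩ ≠ 1 := fun h => hM <|
    Subgroup.eq_top_of_zpowers_generator_mem <| (QuotientGroup.eq_one_iff _).mp <| by
      simpa [ψ] using h
  obtain ⟨a₀⟩ : Nonempty α := (Nat.card_pos_iff.mp (by omega)).1
  obtain ⟨b₀⟩ : Nonempty β := by
    by_contra hβ
    have : IsEmpty β := not_nonempty_iff.mp hβ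
    exact hψρ (Subsingleton.elim _ _)
  obtain ⟨ℓα, -, hℓα⟩ := (isRegularPermGroup_zpowers hρ).exists_label a₀ ψ
  obtain ⟨ℓβ, hℓβ₀, hℓβ⟩ := hH.exists_label b₀ (QuotientGroup.mk' N)
  have hℓαρ : ∀ a, ℓα (ρ a) ≠ ℓα a := fun a h => hψρ <| mul_right_cancel <|
    (hℓα ⟨ρ, Subgroup.mem_zpowers ρ⟩ a).symm.trans (h.trans (one_mul _).symm)
  have hℓβ_surj : ∀ a, ∃ b, ℓβ b = ℓα a := fun a => by
    obtain ⟨g, hg⟩ := QuotientGroup.mk_surjective (ℓα a)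
    exact ⟨(g : Perm β) b₀, by rw [hℓβ, hℓβ₀, mul_one, ← hg]; rfl⟩
  refine ⟨markerFun ρ ℓα ℓβ f, le_antisymm ?_ fun π hπ => ?_⟩
  · rintro _ ⟨σ, τ, hστ, rfl⟩
    refine sumCongr_mem_symmGroup_markerFun (commute_of_mem_zpowers σ.2) (fun a => ?_) (hℓβ τ) τ.2
    rw [hℓα]
    exact congrArg (· * ℓα a) hστ
  · obtain ⟨σ, τ, rfl⟩ := exists_sumCongr_eq_of_mem hα hπ
    have hτ : τ ∈ symmGroup f := mem_symmGroup_of_sumCongr_mem hπ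
    have hσ := mem_zpowers_of_commute hρ (commute_of_sumCongr_mem hα hℓαρ hℓβ_surj hπ)
    refine ⟨⟨σ, hσ⟩, ⟨τ, hτ⟩, mul_right_cancel (b := ℓα a₀) ?_, rfl⟩
    obtain ⟨b, hb⟩ := hℓβ_surj a₀
    calc ψ ⟨σ, hσ⟩ * ℓα a₀ = ℓα (σ a₀) := (hℓα _ a₀).symm
      _ = ℓβ (τ b) :=
        apply_label_eq_of_sumCongr_mem hα (fun a h => hℓαρ a (congrArg ℓα h)) hπ hb.symm
      _ = QuotientGroup.mk ⟨τ, hτ⟩ * ℓα a₀ := by rw [← hb]; exact hℓβ ⟨τ, hτ⟩ b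

theorem subdirectSum_cyclic_regular_representable
    (i : ℕ) (hi : i ∈ ({3, 4, 5} : Set ℕ)) {β : Type*} [Fintype β]
    (H : Subgroup (Equiv.Perm β)) (hreg : IsRegularPermGroup H)
    (M : Subgroup (Cgroup i)) [M.Normal] (N : Subgroup H) [N.Normal]
    (φ : ↥(Cgroup i) ⧸ M ≃* ↥H ⧸ N) (hM : M ≠ ⊤)
    (hH : Representable 2 H) :
    Representable 2 (subdirectSum (Cgroup i) H M N φ) := by
  have hi₃ : 3 ≤ i := by rcases hi with rfl | rfl | rfl <;> norm_num
  have hcard : 2 < Nat.card (Fin i) := by rw [Nat.card_eq_fintype_card, Fintype.card_fin]; omega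
  -- `Cgroup i` unfolds to `zpowers (finRotate i)`, but instance search does not see through it.
  exact representable_subdirectSum_zpowers (hMn := ‹M.Normal›) hcard
    (exists_zpowers_finRotate_apply_eq (by omega)) H hreg M N φ hM hH
end

section
/- Let β be a finite type and let H be a 2-representable subgroup of Equiv.Perm β. Then the direct sum of the trivial group on a one-point type with H, i.e. the subgroup of Equiv.Perm (Unit ⊕ β) of all permutations Equiv.sumCongr 1 τ with τ ∈ H, is 2-representable. -/
/-!
Extend `f` to `Unit ⊕ β` by `f (x ∘ inr)` where the new coordinate is `true` and by a constant
`v ≠ f 0` where it is `false`. The indicator of the new point has value `f 0`, while a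
permutation moving that point turns it into a tuple of value `v`; so every symmetry fixes the
new point, and on tuples that are `true` there it acts as a symmetry of `f`.
-/

open Equiv

section PointExtension

variable {β V : Type*}

def pointExtension (f : (β → Bool) → V) (v : V) : (Unit ⊕ β → Bool) → V :=
  fun x => if x (Sum.inl ()) then f (x ∘ Sum.inr) else v

variable {f : (β → Bool) → V} {v : V}

theorem sumCongr_mem_symmGroup_pointExtension (σ : Perm Unit) {τ : Perm β}
    (hτ : τ ∈ symmGroup f) : Perm.sumCongr σ τ ∈ symmGroup (pointExtension f v) := by
  intro x
  have hσ : σ () = () := Subsingleton.elim _ _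
  have hinr : (x ∘ Perm.sumCongr σ τ) ∘ Sum.inr = (x ∘ Sum.inr) ∘ τ := rfl
  simp only [pointExtension, hinr, hτ (x ∘ Sum.inr), Function.comp_apply, Perm.sumCongr_apply,
    Sum.map_inl, hσ]

theorem mem_symmGroup_of_sumCongr_mem_symmGroup_pointExtension {σ : Perm Unit} {τ : Perm β}
    (h : Perm.sumCongr σ τ ∈ symmGroup (pointExtension f v)) : τ ∈ symmGroup f := by
  intro y
  have hinr : (Sum.elim (fun _ => true) y ∘ Perm.sumCongr σ τ) ∘ Sum.inr = y ∘ τ := rfl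
  simpa [pointExtension, hinr] using h (Sum.elim (fun _ => true) y)

theorem apply_inl_eq_of_mem_symmGroup_pointExtension (hv : v ≠ f fun _ => false)
    {π : Perm (Unit ⊕ β)} (hπ : π ∈ symmGroup (pointExtension f v)) :
    π (Sum.inl ()) = Sum.inl () := by
  by_contra hmoved
  have hx := hπ (Sum.elim (fun _ => true) fun _ => false)
  refine hv ?_
  obtain ⟨b, hb⟩ : ∃ b, π (Sum.inl ()) = Sum.inr b := by
    rcases hinl : π (Sum.inl ()) with ⟨⟩ | b
    · exact absurd hinl hmoved
    · exact ⟨b, rfl⟩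
  simpa [pointExtension, hb] using hx

theorem symmGroup_pointExtension [Finite β] (hv : v ≠ f fun _ => false) :
    symmGroup (pointExtension f v) = directSum ⊥ (symmGroup f) := by
  ext π
  simp only [directSum, Subgroup.mem_map, Subgroup.mem_prod, Subgroup.mem_bot, Prod.exists]
  constructor
  · intro hπ
    have hmaps : Set.MapsTo π (Set.range Sum.inl) (Set.range Sum.inl) := by
      rintro _ ⟨⟨⟩, rfl⟩
      exact ⟨(), (apply_inl_eq_of_mem_symmGroup_pointExtension hv hπ).symm⟩
    obtain ⟨⟨σ, τ⟩, rfl⟩ := Perm.mem_sumCongrHom_range_of_perm_mapsTo_inl hmaps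
    exact ⟨σ, τ, ⟨Subsingleton.elim _ _,
      mem_symmGroup_of_sumCongr_mem_symmGroup_pointExtension hπ⟩, rfl⟩
  · rintro ⟨σ, τ, ⟨-, hτ⟩, rfl⟩
    exact sumCongr_mem_symmGroup_pointExtension σ hτ

end PointExtension

theorem trivial_directSum_representable
    {β : Type*} [Fintype β] (H : Subgroup (Equiv.Perm β))
    (hH : Representable 2 H) :
    Representable 2 (directSum (⊥ : Subgroup (Equiv.Perm Unit)) H) := by
  obtain ⟨f, rfl⟩ := hH
  have hne : ∀ c : Fin 2, 1 - c ≠ c := by decide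
  exact ⟨pointExtension f (1 - f fun _ => false), (symmGroup_pointExtension (hne _)).symm⟩
end
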